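/- Let A_1, …, A_G be real numbers with |A_i| ≤ √(G−1) for all i, let S' ⊆ {1,…,G} be a subset with |S'| = N ≥ 1, mean 0 over S', and empirical second moment (1/N)∑_{i∈S'} A_i² = v. Suppose g_i ∈ ℝ^d satisfy ‖g_i‖ ≤ 2γ. Then ‖(1/N)∑_{i∈S'} A_i g_i‖ ≤ 3·2^{1/3}·γ·(G−1)^{1/6}·v^{1/3}. -/

import Mathlib

theorem stmt15 (G : ℕ) (hG : 2 ≤ G) (d : ℕ) (hd : 1 ≤ d) (γ : ℝ) (hγ : 0 < γ)
    (A : Fin G → ℝ) (hA : ∀ i, |A i| ≤ Real.sqrt ((G : ℝ) - 1))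
    (S' : Finset (Fin G)) (N : ℕ) (hN : 1 ≤ N) (hcard : S'.card = N)
    (hmean : (1 / (N : ℝ)) * ∑ i ∈ S', A i = 0)
    (v : ℝ) (hv : (1 / (N : ℝ)) * ∑ i ∈ S', A i ^ 2 = v)
    (g : Fin G → EuclideanSpace ℝ (Fin d))
    (hg : ∀ i, ‖g i‖ ≤ 2 * γ) :
    ‖(1 / (N : ℝ)) • ∑ i ∈ S', A i • g i‖ ≤
      3 * (2 : ℝ) ^ ((1 : ℝ) / 3) * γ * ((G : ℝ) - 1) ^ ((1 : ℝ) / 6) * v ^ ((1 : ℝ) / 3) := by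
  have hN0 : (0:ℝ) < N := by exact_mod_cast hN
  have hG1 : (0:ℝ) ≤ (G:ℝ) - 1 := by
    have : (2:ℝ) ≤ G := by exact_mod_cast hG
    linarith
  have hv0 : 0 ≤ v := by
    rw [← hv]; positivity
  have hsumsq : ∑ i ∈ S', A i ^ 2 = N * v := by
    field_simp at hv; linarith [hv]
  have hvG : v ≤ (G:ℝ) - 1 := by
    have hle : ∑ i ∈ S', A i ^ 2 ≤ N * ((G:ℝ) - 1) := by
      calc ∑ i ∈ S', A i ^ 2 ≤ ∑ _i ∈ S', ((G:ℝ) - 1) := by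
            apply Finset.sum_le_sum
            intro i _
            rw [← sq_abs]
            calc |A i| ^ 2 ≤ Real.sqrt ((G:ℝ)-1) ^ 2 :=
                  pow_le_pow_left₀ (abs_nonneg _) (hA i) 2
              _ = (G:ℝ) - 1 := Real.sq_sqrt hG1
        _ = N * ((G:ℝ) - 1) := by rw [Finset.sum_const, hcard, nsmul_eq_mul]
    rw [hsumsq] at hle
    exact le_of_mul_le_mul_left (by linarith) hN0
  -- Cauchy-Schwarz : ∑ |A i| ≤ N * √v
  have hsum : ∑ i ∈ S', |A i| ≤ N * Real.sqrt v := by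
    have hcs : (∑ i ∈ S', |A i|) ^ 2 ≤ (S'.card : ℝ) * ∑ i ∈ S', |A i| ^ 2 :=
      sq_sum_le_card_mul_sum_sq
    simp only [sq_abs, hcard, hsumsq] at hcs
    have h1 : (∑ i ∈ S', |A i|) ^ 2 ≤ (N * Real.sqrt v) ^ 2 := by
      calc (∑ i ∈ S', |A i|) ^ 2 ≤ (N:ℝ) * ((N:ℝ) * v) := hcs
        _ = (N * Real.sqrt v) ^ 2 := by
            rw [mul_pow, Real.sq_sqrt hv0]; ring
    have h0 : 0 ≤ ∑ i ∈ S', |A i| := Finset.sum_nonneg fun i _ => abs_nonneg _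
    exact (pow_le_pow_iff_left₀ h0 (by positivity) (by norm_num)).mp h1
  have hnorm : ‖(1 / (N:ℝ)) • ∑ i ∈ S', A i • g i‖ ≤ 2 * γ * Real.sqrt v := by
    rw [norm_smul, Real.norm_eq_abs, abs_of_pos (by positivity)]
    have h1 : ‖∑ i ∈ S', A i • g i‖ ≤ ∑ i ∈ S', |A i| * (2 * γ) := by
      refine (norm_sum_le _ _).trans (Finset.sum_le_sum ?_)
      intro i _
      rw [norm_smul, Real.norm_eq_abs]
      exact mul_le_mul_of_nonneg_left (hg i) (abs_nonneg _)
    have h2 : ∑ i ∈ S', |A i| * (2 * γ) ≤ N * Real.sqrt v * (2 * γ) := by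
      rw [← Finset.sum_mul]
      exact mul_le_mul_of_nonneg_right hsum (by positivity)
    calc 1 / (N:ℝ) * ‖∑ i ∈ S', A i • g i‖
        ≤ 1 / (N:ℝ) * (N * Real.sqrt v * (2 * γ)) := by
          apply mul_le_mul_of_nonneg_left (h1.trans h2) (by positivity)
      _ = 2 * γ * Real.sqrt v := by field_simp
  refine hnorm.trans ?_
  rcases hv0.eq_or_lt with h | hvpos
  · rw [← h, Real.sqrt_zero, Real.zero_rpow (by norm_num)]
    simp
  · have hsplit : Real.sqrt v = v ^ ((1:ℝ)/3) * v ^ ((1:ℝ)/6) := by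
      rw [Real.sqrt_eq_rpow, ← Real.rpow_add hvpos]
      norm_num
    rw [hsplit]
    have h16 : v ^ ((1:ℝ)/6) ≤ ((G:ℝ) - 1) ^ ((1:ℝ)/6) :=
      Real.rpow_le_rpow hv0 hvG (by norm_num)
    have h2c : (2:ℝ) ≤ 3 * (2:ℝ) ^ ((1:ℝ)/3) := by
      have : (1:ℝ) ≤ (2:ℝ) ^ ((1:ℝ)/3) := Real.one_le_rpow one_le_two (by norm_num)
      linarith
    have hv13 : (0:ℝ) ≤ v ^ ((1:ℝ)/3) := Real.rpow_nonneg hv0 _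
    have hv16 : (0:ℝ) ≤ v ^ ((1:ℝ)/6) := Real.rpow_nonneg hv0 _
    have hG16 : (0:ℝ) ≤ ((G:ℝ) - 1) ^ ((1:ℝ)/6) := Real.rpow_nonneg hG1 _
    calc 2 * γ * (v ^ ((1:ℝ)/3) * v ^ ((1:ℝ)/6))
        ≤ 2 * γ * (v ^ ((1:ℝ)/3) * ((G:ℝ)-1) ^ ((1:ℝ)/6)) := by
          apply mul_le_mul_of_nonneg_left _ (by positivity)
          exact mul_le_mul_of_nonneg_left h16 hv13
      _ ≤ 3 * (2:ℝ) ^ ((1:ℝ)/3) * γ * (((G:ℝ)-1) ^ ((1:ℝ)/6) * v ^ ((1:ℝ)/3)) := by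
          have hx : 0 ≤ v ^ ((1:ℝ)/3) * ((G:ℝ)-1) ^ ((1:ℝ)/6) := by positivity
          nlinarith [mul_le_mul_of_nonneg_right h2c (mul_nonneg hγ.le hx)]
      _ = 3 * (2:ℝ) ^ ((1:ℝ)/3) * γ * ((G:ℝ)-1) ^ ((1:ℝ)/6) * v ^ ((1:ℝ)/3) := by ring
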